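/- arXiv:2401.00829 — 12 statements merged into one kernel-verified Lean document; each statement's English description precedes it below -/
import Mathlib

section
/- If S is a c-sparse subset of the n×n checkerboard, then |S| ≤ 2n−1. -/
/-- Lexicographic order on cells of the checkerboard. -/
def clt (p q : ℕ × ℕ) : Prop := p.1 < q.1 ∨ (p.1 = q.1 ∧ p.2 < q.2)

/-- The n × m checkerboard: cells (i,j) with 1 ≤ i ≤ n, 1 ≤ j ≤ m. -/
def board (n m : ℕ) : Finset (ℕ × ℕ) := Finset.Icc 1 n ×ˢ Finset.Icc 1 m

/-- A set of cells is c-sparse if no cell of the set in a different column lies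
strictly (lexicographically) between two cells of the set in the same column. -/
def CSparse (S : Finset (ℕ × ℕ)) : Prop :=
  ∀ a₁ a₂ b x y, (a₁, b) ∈ S → (a₂, b) ∈ S → (x, y) ∈ S → y ≠ b →
    clt (a₁, b) (x, y) → clt (x, y) (a₂, b) → False

theorem csparse_card_le_square (n : ℕ) (S : Finset (ℕ × ℕ))
    (hS : S ⊆ board n n) (h : CSparse S) : S.card ≤ 2 * n - 1 := by
  classical
  set T := S.filter (fun p => ∀ a, (a, p.2) ∈ S → p.1 ≤ a) with hTdef
  have hb : ∀ p ∈ S, 1 ≤ p.1 ∧ p.1 ≤ n ∧ 1 ≤ p.2 ∧ p.2 ≤ n := by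
    intro p hp
    have := hS hp
    simp only [board, Finset.mem_product, Finset.mem_Icc] at this
    tauto
  -- column-minimal cells: at most n, injective by column
  have h1 : T.card ≤ n := by
    have hinj : Set.InjOn (Prod.snd : ℕ × ℕ → ℕ) ↑T := by
      intro p hp q hq hpq
      simp only [hTdef, Finset.coe_filter, Set.mem_setOf_eq] at hp hq
      obtain ⟨hpS, hpmin⟩ := hp
      obtain ⟨hqS, hqmin⟩ := hq
      have e1 : p.1 ≤ q.1 := hpmin q.1 (by rw [hpq, Prod.mk.eta]; exact hqS)
      have e2 : q.1 ≤ p.1 := hqmin p.1 (by rw [← hpq, Prod.mk.eta]; exact hpS)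
      exact Prod.ext (le_antisymm e1 e2) hpq
    have hsub : T.image Prod.snd ⊆ Finset.Icc 1 n := by
      intro b hb'
      simp only [Finset.mem_image] at hb'
      obtain ⟨p, hp, rfl⟩ := hb'
      have := hb p (Finset.mem_filter.mp hp).1
      simp only [Finset.mem_Icc]; omega
    calc T.card = (T.image Prod.snd).card := (Finset.card_image_of_injOn hinj).symm
      _ ≤ (Finset.Icc 1 n).card := Finset.card_le_card hsub
      _ = n := by simp
  -- non-minimal cells: at most n - 1, injective by row, row ≥ 2
  have hnm : ∀ p ∈ S \ T, ∃ a, (a, p.2) ∈ S ∧ a < p.1 := by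
    intro p hp
    rw [Finset.mem_sdiff] at hp
    obtain ⟨hpS, hpT⟩ := hp
    rw [hTdef, Finset.mem_filter] at hpT
    push_neg at hpT
    obtain ⟨a, haS, ha⟩ := hpT hpS
    exact ⟨a, haS, by omega⟩
  have h2 : (S \ T).card ≤ n - 1 := by
    have hinj : Set.InjOn (Prod.fst : ℕ × ℕ → ℕ) ↑(S \ T) := by
      intro p hp q hq hpq
      simp only [Finset.coe_sdiff, Set.mem_diff, Finset.mem_coe] at hp hq
      have hpS : p ∈ S := hp.1
      have hqS : q ∈ S := hq.1
      by_contra hne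
      have hsne : p.2 ≠ q.2 := fun e => hne (Prod.ext hpq e)
      rcases Nat.lt_or_ge p.2 q.2 with hlt | hge
      · obtain ⟨a, haS, ha⟩ := hnm q (Finset.mem_sdiff.mpr ⟨hq.1, fun c => hq.2 c⟩)
        exact h a q.1 q.2 p.1 p.2 haS (by rw [Prod.mk.eta]; exact hqS)
          (by rw [Prod.mk.eta]; exact hpS) hsne
          (Or.inl (by omega)) (Or.inr ⟨hpq, hlt⟩)
      · have hlt' : q.2 < p.2 := lt_of_le_of_ne hge (Ne.symm hsne)
        obtain ⟨a, haS, ha⟩ := hnm p (Finset.mem_sdiff.mpr ⟨hp.1, fun c => hp.2 c⟩)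
        exact h a p.1 p.2 q.1 q.2 haS (by rw [Prod.mk.eta]; exact hpS)
          (by rw [Prod.mk.eta]; exact hqS) (Ne.symm hsne)
          (Or.inl (by omega)) (Or.inr ⟨hpq.symm, hlt'⟩)
    have hsub : (S \ T).image Prod.fst ⊆ Finset.Icc 2 n := by
      intro r hr
      simp only [Finset.mem_image] at hr
      obtain ⟨p, hp, rfl⟩ := hr
      obtain ⟨a, haS, ha⟩ := hnm p hp
      have h1 := hb p (Finset.mem_sdiff.mp hp).1
      have h2 := hb (a, p.2) haS
      simp only [Finset.mem_Icc]
      simp at h2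
      omega
    calc (S \ T).card = ((S \ T).image Prod.fst).card :=
        (Finset.card_image_of_injOn hinj).symm
      _ ≤ (Finset.Icc 2 n).card := Finset.card_le_card hsub
      _ = n - 1 := by simp
  have hcut : S.card = T.card + (S \ T).card := by
    rw [add_comm]
    exact (Finset.card_sdiff_add_card_eq_card (Finset.filter_subset _ _)).symm
  omega
end

section
/- If S is a c-sparse subset of the n×m checkerboard, then |S| ≤ n+m−1. -/
theorem csparse_card_le (n m : ℕ) (S : Finset (ℕ × ℕ))
    (hS : S ⊆ board n m) (h : CSparse S) : S.card ≤ n + m - 1 := by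
  rcases Nat.eq_zero_or_pos n with hn | hn
  · subst hn
    have hSe : S = ∅ := by
      rw [Finset.eq_empty_iff_forall_notMem]
      intro p hp
      have := hS hp
      simp [board, Finset.mem_Icc] at this
    simp [hSe]
  · classical
    set T := S.filter (fun p => ∀ q ∈ S, q.2 = p.2 → p.1 ≤ q.1) with hT
    have hTsub : T ⊆ S := Finset.filter_subset _ _
    have hsplit := Finset.card_sdiff_add_card_eq_card hTsub
    have hTcard : T.card ≤ m := by
      have hle : T.card ≤ (Finset.Icc 1 m).card := by
        apply Finset.card_le_card_of_injOn (fun p => p.2)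
        · intro p hp
          simp only [Finset.mem_coe, hT, Finset.mem_filter] at hp
          have := hS hp.1
          simp [board, Finset.mem_Icc] at this ⊢
          omega
        · intro p hp q hq hpq
          simp only [Finset.mem_coe, hT, Finset.mem_filter] at hp hq
          have h1 := hp.2 q hq.1 hpq.symm
          have h2 := hq.2 p hp.1 hpq
          exact Prod.ext (le_antisymm h1 h2) hpq
      simpa using hle
    have hNcard : (S \ T).card ≤ n - 1 := by
      have hle : (S \ T).card ≤ (Finset.Icc 2 n).card := by
        apply Finset.card_le_card_of_injOn (fun p => p.1)
        · intro p hp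
          simp only [Finset.mem_coe, Finset.mem_sdiff, hT, Finset.mem_filter] at hp
          obtain ⟨hpS, hnp⟩ := hp
          have hnp' : ¬ ∀ q ∈ S, q.2 = p.2 → p.1 ≤ q.1 := fun hall => hnp ⟨hpS, hall⟩
          push_neg at hnp'
          obtain ⟨q, hqS, hq2, hq1⟩ := hnp'
          have hb := hS hpS
          have hb2 := hS hqS
          simp [board, Finset.mem_Icc] at hb hb2 ⊢
          omega
        · intro p hp q hq hpq
          simp only [Finset.mem_coe, Finset.mem_sdiff, hT, Finset.mem_filter] at hp hq
          by_contra hne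
          have hpq' : p.1 = q.1 := hpq
          have hsnd : p.2 ≠ q.2 := fun heq => hne (Prod.ext hpq' heq)
          obtain ⟨hpS, hnp⟩ := hp
          obtain ⟨hqS, hnq⟩ := hq
          rcases Nat.lt_or_ge p.2 q.2 with hlt | hge
          · have hnq' : ¬ ∀ r ∈ S, r.2 = q.2 → q.1 ≤ r.1 := fun hall => hnq ⟨hqS, hall⟩
            push_neg at hnq'
            obtain ⟨r, hrS, hr2, hr1⟩ := hnq'
            have hrq : (r.1, q.2) ∈ S := by rwa [← hr2]
            exact h r.1 q.1 q.2 p.1 p.2 hrq (by simpa using hqS) (by simpa using hpS)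
              hsnd (Or.inl (by omega)) (Or.inr ⟨hpq', hlt⟩)
          · have hlt : q.2 < p.2 := lt_of_le_of_ne hge hsnd.symm
            have hnp' : ¬ ∀ r ∈ S, r.2 = p.2 → p.1 ≤ r.1 := fun hall => hnp ⟨hpS, hall⟩
            push_neg at hnp'
            obtain ⟨r, hrS, hr2, hr1⟩ := hnp'
            have hrp : (r.1, p.2) ∈ S := by rwa [← hr2]
            exact h r.1 p.1 p.2 q.1 q.2 hrp (by simpa using hpS) (by simpa using hqS)
              hsnd.symm (Or.inl (by omega)) (Or.inr ⟨hpq'.symm, hlt⟩)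
      rw [Nat.card_Icc] at hle
      omega
    omega
end

section
/- Let n be an odd natural number and let D_i = {(x,y) in the n×n checkerboard : x−y = i}. For each 0 ≤ k ≤ (n−1)/2, the set S_{2k} = D_{2k} ∪ D_{2k+1} ∪ D_{2k−n} ∪ D_{2k−n−1} is a c-sparse subset of the n×n checkerboard. -/
/-- The union of diagonals D_{2k} ∪ D_{2k+1} ∪ D_{2k-n} ∪ D_{2k-n-1} of the n × n board,
where D_i = {(x,y) : x - y = i}. -/
noncomputable def S2 (n k : ℕ) : Finset (ℕ × ℕ) :=
  (board n n).filter (fun p =>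
    (p.1 : ℤ) - p.2 = 2 * k ∨ (p.1 : ℤ) - p.2 = 2 * k + 1 ∨
    (p.1 : ℤ) - p.2 = 2 * k - n ∨ (p.1 : ℤ) - p.2 = 2 * k - n - 1)

theorem diag_union_csparse (n : ℕ) (hn : Odd n) (k : ℕ) (hk : k ≤ (n - 1) / 2) :
    CSparse (S2 n k) := by
  intro a₁ a₂ b x y h1 h2 h3 hyb hlt1 hlt2
  simp only [S2, board, Finset.mem_filter, Finset.mem_product, Finset.mem_Icc] at h1 h2 h3
  obtain ⟨m, hm⟩ := hn
  simp only [clt] at hlt1 hlt2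
  omega
end

section
/- For odd n, the sets S_{2k} = D_{2k} ∪ D_{2k+1} ∪ D_{2k−n} ∪ D_{2k−n−1}, for 0 ≤ k ≤ (n−1)/2, form a partition of the n×n checkerboard into (n+1)/2 c-sparse sets. -/
theorem diag_csparse_partition (n : ℕ) (hn : Odd n) :
    (∀ k ∈ Finset.Iic ((n - 1) / 2), CSparse (S2 n k)) ∧
    (∀ k ∈ Finset.Iic ((n - 1) / 2), ∀ k' ∈ Finset.Iic ((n - 1) / 2), k ≠ k' →
      Disjoint (S2 n k) (S2 n k')) ∧
    (Finset.Iic ((n - 1) / 2)).biUnion (S2 n) = board n n ∧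
    (Finset.Iic ((n - 1) / 2)).card = (n + 1) / 2 := by
  obtain ⟨m, hm⟩ := hn
  refine ⟨?_, ?_, ?_, ?_⟩
  · intro k hk a₁ a₂ b x y h1 h2 h3 hy hlt1 hlt2
    simp only [S2, board, Finset.mem_filter, Finset.mem_product, Finset.mem_Icc] at h1 h2 h3
    simp only [Finset.mem_Iic] at hk
    unfold clt at hlt1 hlt2
    simp only at hlt1 hlt2
    omega
  · intro k hk k' hk' hne
    simp only [Finset.mem_Iic] at hk hk'
    rw [Finset.disjoint_left]
    intro p hp hp'
    simp only [S2, board, Finset.mem_filter, Finset.mem_product, Finset.mem_Icc] at hp hp'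
    omega
  · ext p
    simp only [Finset.mem_biUnion, Finset.mem_Iic, S2, Finset.mem_filter, board,
      Finset.mem_product, Finset.mem_Icc]
    constructor
    · rintro ⟨k, _, h, _⟩; exact h
    · intro hp
      rcases le_or_gt p.2 p.1 with h | h
      · exact ⟨(p.1 - p.2) / 2, by omega, hp, by omega⟩
      · exact ⟨(n - (p.2 - p.1) + 1) / 2, by omega, hp, by omega⟩
  · rw [Nat.card_Iic]; omega
end

section
/- Any c-sparse partition of the n×n checkerboard has more than n/2 parts. -/
/-- A c-sparse partition of the n × n checkerboard. -/
def IsCSparsePartition (n : ℕ) (Q : Finset (Finset (ℕ × ℕ))) : Prop :=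
  (∀ S ∈ Q, S.Nonempty ∧ CSparse S) ∧
  (∀ S ∈ Q, ∀ T ∈ Q, S ≠ T → Disjoint S T) ∧
  Q.biUnion id = board n n

def colTops (S : Finset (ℕ × ℕ)) : Finset (ℕ × ℕ) :=
  S.filter fun p => ∀ q ∈ S, q.2 = p.2 → p.1 ≤ q.1

lemma mem_colTops {S : Finset (ℕ × ℕ)} {p : ℕ × ℕ} :
    p ∈ colTops S ↔ p ∈ S ∧ ∀ q ∈ S, q.2 = p.2 → p.1 ≤ q.1 :=
  Finset.mem_filter

lemma colTops_subset (S : Finset (ℕ × ℕ)) : colTops S ⊆ S :=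
  Finset.filter_subset _ S

lemma mem_board {n m : ℕ} {p : ℕ × ℕ} :
    p ∈ board n m ↔ (1 ≤ p.1 ∧ p.1 ≤ n) ∧ 1 ≤ p.2 ∧ p.2 ≤ m := by
  simp only [board, Finset.mem_product, Finset.mem_Icc]

lemma card_board (n m : ℕ) : (board n m).card = n * m := by
  simp [board, Finset.card_product]

lemma card_colTops_le {n m : ℕ} {S : Finset (ℕ × ℕ)} (hS : S ⊆ board n m) :
    (colTops S).card ≤ m := by
  calc (colTops S).card ≤ (Finset.Icc 1 m).card := by
        refine Finset.card_le_card_of_injOn Prod.snd (fun p hp => ?_) (fun p hp q hq hpq => ?_)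
        · have := (mem_board.1 (hS (mem_colTops.1 hp).1)).2
          simpa using this
        · obtain ⟨hpS, hp⟩ := mem_colTops.1 hp
          obtain ⟨hqS, hq⟩ := mem_colTops.1 hq
          exact Prod.ext (le_antisymm (hp q hqS hpq.symm) (hq p hpS hpq)) hpq
    _ = m := by simp

lemma exists_above_of_mem_sdiff_colTops {S : Finset (ℕ × ℕ)} {p : ℕ × ℕ}
    (hp : p ∈ S \ colTops S) : ∃ a < p.1, (a, p.2) ∈ S := by
  obtain ⟨hpS, hp⟩ := Finset.mem_sdiff.1 hp
  simp only [mem_colTops, hpS, true_and, not_forall, not_le] at hp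
  obtain ⟨q, hqS, hcol, hlt⟩ := hp
  exact ⟨q.1, hlt, hcol ▸ hqS⟩

namespace CSparse

variable {S : Finset (ℕ × ℕ)}

lemma eq_of_fst_eq_of_mem_sdiff_colTops (hS : CSparse S) {p q : ℕ × ℕ}
    (hp : p ∈ S \ colTops S) (hq : q ∈ S \ colTops S) (hrow : p.1 = q.1) : p = q := by
  by_contra hne
  have hcol : p.2 ≠ q.2 := fun h => hne (Prod.ext hrow h)
  have hpS := (Finset.mem_sdiff.1 hp).1
  have hqS := (Finset.mem_sdiff.1 hq).1
  rcases hcol.lt_or_gt with hlt | hgt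
  · obtain ⟨a, ha, haS⟩ := exists_above_of_mem_sdiff_colTops hq
    exact hS a q.1 q.2 p.1 p.2 haS hqS hpS hcol (Or.inl (hrow ▸ ha)) (Or.inr ⟨hrow, hlt⟩)
  · obtain ⟨a, ha, haS⟩ := exists_above_of_mem_sdiff_colTops hp
    exact hS a p.1 p.2 q.1 q.2 haS hpS hqS hcol.symm (Or.inl (hrow ▸ ha))
      (Or.inr ⟨hrow.symm, hgt⟩)

lemma card_sdiff_colTops_le (hS : CSparse S) {n m : ℕ} (hsub : S ⊆ board n m) :
    (S \ colTops S).card ≤ n - 1 := by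
  calc (S \ colTops S).card ≤ (Finset.Icc 2 n).card := by
        refine Finset.card_le_card_of_injOn Prod.fst (fun p hp => ?_)
          (fun p hp q hq => hS.eq_of_fst_eq_of_mem_sdiff_colTops hp hq)
        obtain ⟨a, ha, haS⟩ := exists_above_of_mem_sdiff_colTops hp
        have hpn := (mem_board.1 (hsub (Finset.mem_sdiff.1 hp).1)).1
        have ha1 := (mem_board.1 (hsub haS)).1
        simp only [Finset.coe_Icc, Set.mem_Icc]
        omega
    _ = n - 1 := by simp

theorem card_le (hS : CSparse S) {n m : ℕ} (hsub : S ⊆ board n m) :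
    S.card ≤ m + (n - 1) := by
  rw [← Finset.card_sdiff_add_card_eq_card (colTops_subset S)]
  have := card_colTops_le hsub
  have := hS.card_sdiff_colTops_le hsub
  omega

end CSparse

namespace IsCSparsePartition

variable {n : ℕ} {Q : Finset (Finset (ℕ × ℕ))}

lemma subset_board (hQ : IsCSparsePartition n Q) {S : Finset (ℕ × ℕ)} (hS : S ∈ Q) :
    S ⊆ board n n :=
  hQ.2.2 ▸ Finset.subset_biUnion_of_mem id hS

lemma sum_card (hQ : IsCSparsePartition n Q) : ∑ S ∈ Q, S.card = n * n := by
  rw [← card_board, ← hQ.2.2, Finset.card_biUnion (t := id) hQ.2.1]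
  rfl

end IsCSparsePartition

theorem csparse_partition_large (n : ℕ) (hn : 1 ≤ n)
    (Q : Finset (Finset (ℕ × ℕ))) (hQ : IsCSparsePartition n Q) :
    n < 2 * Q.card := by
  have hbound : n * n ≤ Q.card * (2 * n - 1) := by
    rw [← hQ.sum_card, ← smul_eq_mul]
    refine Finset.sum_le_card_nsmul Q _ _ fun S hS => ?_
    have := (hQ.1 S hS).2.card_le (hQ.subset_board hS)
    omega
  obtain ⟨k, rfl⟩ : ∃ k, n = k + 1 := ⟨n - 1, by omega⟩
  have hodd : 2 * (k + 1) - 1 = 2 * k + 1 := by omega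
  rw [hodd] at hbound
  by_contra! h
  nlinarith
end

section
/- If S is a weak-c-sparse subset of the n×m checkerboard, then |S| ≤ n+2m−2. -/
/-- A set of cells is weak-c-sparse if no cell of the set in a different column and with
row coordinate strictly between lies lexicographically strictly between two cells of the
set in the same column. -/
def WeakCSparse (S : Finset (ℕ × ℕ)) : Prop :=
  ∀ a₁ a₂ b x y, (a₁, b) ∈ S → (a₂, b) ∈ S → (x, y) ∈ S → y ≠ b →
    a₁ < x → x < a₂ → clt (a₁, b) (x, y) → clt (x, y) (a₂, b) → False

/-!
Call a cell of `S` interior if its column contains cells of `S` in both an earlier and a later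
row. Weak c-sparseness forces an interior cell to be the only cell of `S` in its row, and its row
lies strictly between rows `1` and `n`, so there are at most `n - 2` interior cells. Every other
cell is the first or the last cell of `S` in its column, which gives at most `2 m` more.
-/

namespace WeakCSparse

variable {S : Finset (ℕ × ℕ)}

theorem snd_eq_of_between (h : WeakCSparse S) {a₁ a₂ x y y' : ℕ}
    (h₁ : (a₁, y) ∈ S) (h₂ : (a₂, y) ∈ S) (hx : (x, y') ∈ S)
    (hlt₁ : a₁ < x) (hlt₂ : x < a₂) : y' = y := by
  by_contra hne
  exact h a₁ a₂ y x y' h₁ h₂ hx hne hlt₁ hlt₂ (Or.inl hlt₁) (Or.inl hlt₂)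

end WeakCSparse

section Column

variable (S : Finset (ℕ × ℕ))

def HasCellBefore (p : ℕ × ℕ) : Prop := ∃ a < p.1, (a, p.2) ∈ S

def HasCellAfter (p : ℕ × ℕ) : Prop := ∃ a, p.1 < a ∧ (a, p.2) ∈ S

def IsInterior (p : ℕ × ℕ) : Prop := HasCellBefore S p ∧ HasCellAfter S p

variable {S} {p q : ℕ × ℕ}

theorem eq_of_not_hasCellBefore (hp : p ∈ S) (hq : q ∈ S) (hcol : p.2 = q.2)
    (hp' : ¬HasCellBefore S p) (hq' : ¬HasCellBefore S q) : p = q := by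
  refine Prod.ext ?_ hcol
  rcases lt_trichotomy p.1 q.1 with hlt | heq | hgt
  · exact absurd ⟨p.1, hlt, by rwa [← hcol]⟩ hq'
  · exact heq
  · exact absurd ⟨q.1, hgt, by rwa [hcol]⟩ hp'

theorem eq_of_not_hasCellAfter (hp : p ∈ S) (hq : q ∈ S) (hcol : p.2 = q.2)
    (hp' : ¬HasCellAfter S p) (hq' : ¬HasCellAfter S q) : p = q := by
  refine Prod.ext ?_ hcol
  rcases lt_trichotomy p.1 q.1 with hlt | heq | hgt
  · exact absurd ⟨q.1, hlt, by rwa [hcol]⟩ hp'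
  · exact heq
  · exact absurd ⟨p.1, hgt, by rwa [← hcol]⟩ hq'

end Column

variable {n m : ℕ} {S : Finset (ℕ × ℕ)}

theorem card_le_of_subset_board (hS : S ⊆ board n m) : S.card ≤ n * m := by
  simpa [board] using Finset.card_le_card hS

theorem WeakCSparse.card_filter_isInterior_le [DecidablePred (IsInterior S)]
    (hS : S ⊆ board n m) (h : WeakCSparse S) :
    (S.filter (IsInterior S)).card ≤ n - 2 := by
  have key : (S.filter (IsInterior S)).card ≤ (Finset.Ico 2 n).card :=
    Finset.card_le_card_of_injOn Prod.fst ?_ ?_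
  · simpa using key
  · rintro p hp
    obtain ⟨-, ⟨a, ha, haS⟩, ⟨b, hb, hbS⟩⟩ := Finset.mem_filter.mp hp
    have ha' := Finset.mem_product.mp (hS haS)
    have hb' := Finset.mem_product.mp (hS hbS)
    simp only [Finset.mem_Icc] at ha' hb'
    simp only [Finset.coe_Ico, Set.mem_Ico]
    omega
  · rintro p hp q hq hrow
    obtain ⟨-, ⟨a, ha, haS⟩, ⟨b, hb, hbS⟩⟩ := Finset.mem_filter.mp hp
    have hqS : (p.1, q.2) ∈ S := by
      rw [show p.1 = q.1 from hrow]
      exact (Finset.mem_filter.mp hq).1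
    exact Prod.ext hrow (h.snd_eq_of_between haS hbS hqS ha hb).symm

theorem card_filter_not_isInterior_le [DecidablePred (IsInterior S)] (hS : S ⊆ board n m) :
    (S.filter (¬IsInterior S ·)).card ≤ 2 * m := by
  have key : (S.filter (¬IsInterior S ·)).card ≤
      (Finset.Icc 1 m ×ˢ (Finset.univ : Finset Prop)).card :=
    Finset.card_le_card_of_injOn (fun p ↦ (p.2, HasCellBefore S p)) ?_ ?_
  · simpa [Finset.card_product, mul_comm] using key
  · rintro p hp
    have hcol := (Finset.mem_product.mp (hS (Finset.mem_filter.mp hp).1)).2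
    exact Finset.mem_product.mpr ⟨hcol, Finset.mem_univ _⟩
  · rintro p hp q hq hpq
    obtain ⟨hpS, hp⟩ := Finset.mem_filter.mp hp
    obtain ⟨hqS, hq⟩ := Finset.mem_filter.mp hq
    obtain ⟨hcol, hflag⟩ : p.2 = q.2 ∧ HasCellBefore S p = HasCellBefore S q :=
      Prod.ext_iff.mp hpq
    by_cases hbefore : HasCellBefore S p
    · have hbefore' : HasCellBefore S q := hflag ▸ hbefore
      exact eq_of_not_hasCellAfter hpS hqS hcol (fun h ↦ hp ⟨hbefore, h⟩)
        (fun h ↦ hq ⟨hbefore', h⟩)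
    · exact eq_of_not_hasCellBefore hpS hqS hcol hbefore (hflag ▸ hbefore)

theorem weak_csparse_card_le (n m : ℕ) (S : Finset (ℕ × ℕ))
    (hS : S ⊆ board n m) (h : WeakCSparse S) : S.card ≤ n + 2 * m - 2 := by
  classical
  rcases le_or_gt n 1 with hn | hn
  · calc S.card ≤ n * m := card_le_of_subset_board hS
      _ ≤ n + 2 * m - 2 := by interval_cases n <;> omega
  · calc S.card = (S.filter (IsInterior S)).card + (S.filter (¬IsInterior S ·)).card :=
          (Finset.card_filter_add_card_filter_not _).symm
      _ ≤ (n - 2) + 2 * m :=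
          add_le_add (h.card_filter_isInterior_le hS) (card_filter_not_isInterior_le hS)
      _ = n + 2 * m - 2 := by omega
end

section
/- Let S be a weak-c-sparse subset of the n×m checkerboard and let S' be obtained from S by deleting, for each column j, the lexicographically smallest element of S in column j (if it exists). Then S' is a c-sparse subset of the n×m checkerboard. -/
attribute [local instance] Classical.propDecidable

theorem weak_csparse_delete_minima (n m : ℕ) (S : Finset (ℕ × ℕ)) (hS : S ⊆ board n m)
    (h : WeakCSparse S) :
    CSparse (S.filter (fun p => ∃ q ∈ S, q.2 = p.2 ∧ clt q p)) := by
  intro a₁ a₂ b x y h1 h2 h3 hyb hlt1 hlt2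
  simp only [Finset.mem_filter] at h1 h2 h3
  obtain ⟨h1S, ⟨a₀, b'⟩, hq1S, hq1b, hq1lt⟩ := h1
  obtain ⟨h2S, -⟩ := h2
  obtain ⟨h3S, ⟨x₀, y'⟩, hq3S, hq3y, hq3lt⟩ := h3
  simp only at hq1b hq3y
  obtain rfl := hq1b.symm
  obtain rfl := hq3y.symm
  have ha₀ : a₀ < a₁ := by
    rcases hq1lt with hl | ⟨-, hl⟩
    · exact hl
    · exact absurd hl (lt_irrefl _)
  have hx₀ : x₀ < x := by
    rcases hq3lt with hl | ⟨-, hl⟩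
    · exact hl
    · exact absurd hl (lt_irrefl _)
  rcases hlt1 with hax | ⟨hax, hby⟩
  · rcases hlt2 with hxa | ⟨hxa, hyb2⟩
    · exact h a₁ a₂ b x y h1S h2S h3S hyb hax hxa (Or.inl hax) (Or.inl hxa)
    · obtain rfl := hxa
      rcases lt_trichotomy x₀ a₁ with h' | h' | h'
      · exact h x₀ x y a₁ b hq3S h3S h1S (Ne.symm hyb) h' hax (Or.inl h') (Or.inl hax)
      · obtain rfl := h'
        exact h a₀ x b x₀ y hq1S h2S hq3S hyb ha₀ hx₀ (Or.inl ha₀) (Or.inl hx₀)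
      · exact h a₁ x b x₀ y h1S h2S hq3S hyb h' hx₀ (Or.inl h') (Or.inl hx₀)
  · obtain rfl := hax
    have hxa : a₁ < a₂ := by
      rcases hlt2 with hl | ⟨-, hl⟩
      · exact hl
      · exact absurd (hby.trans hl) (lt_irrefl _)
    exact h a₀ a₂ b a₁ y hq1S h2S h3S hyb ha₀ hxa (Or.inl ha₀) hlt2
end

section
/- In the tournament T_k on the cells of the (2k−1)×(2k−1) checkerboard, a subset V of vertices induces an acyclic subtournament if and only if V is c-sparse. -/
/-- The orientation of the edges of the tournament built on the checkerboard:
within a column the edge goes from the lexicographically smaller cell to the larger,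
between different columns from the larger to the smaller. -/
def tedge (p q : ℕ × ℕ) : Prop :=
  (p.2 = q.2 ∧ clt p q) ∨ (p.2 ≠ q.2 ∧ clt q p)

/-- The induced subdigraph on `V` has no directed cycle. -/
def AcyclicOn (V : Finset (ℕ × ℕ)) : Prop :=
  ¬ ∃ (k : ℕ) (_ : 3 ≤ k) (f : ZMod k → ℕ × ℕ),
      Function.Injective f ∧ (∀ i, f i ∈ V) ∧ ∀ i : ZMod k, tedge (f i) (f (i + 1))

lemma clt_trans {p q r : ℕ × ℕ} (h1 : clt p q) (h2 : clt q r) : clt p r := by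
  unfold clt at *; omega

lemma clt_irrefl {p : ℕ × ℕ} (h : clt p p) : False := by
  unfold clt at h; omega

lemma clt_total {p q : ℕ × ℕ} (h : p ≠ q) : clt p q ∨ clt q p := by
  have : p.1 ≠ q.1 ∨ p.2 ≠ q.2 := by
    by_contra hc
    push_neg at hc
    exact h (Prod.ext hc.1 hc.2)
  unfold clt; omega

theorem acyclic_iff_csparse (k : ℕ) (hk : 1 ≤ k) (V : Finset (ℕ × ℕ))
    (hV : V ⊆ board (2 * k - 1) (2 * k - 1)) :
    AcyclicOn V ↔ CSparse V := by
  classical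
  constructor
  · -- acyclic → c-sparse
    intro hA a₁ a₂ b x y h1 h2 h3 hy hlt1 hlt2
    apply hA
    have hne1 : (a₁, b) ≠ (x, y) := fun h => hy (congrArg Prod.snd h).symm
    have hne2 : (a₂, b) ≠ (x, y) := fun h => hy (congrArg Prod.snd h).symm
    have h13 : clt (a₁, b) (a₂, b) := clt_trans hlt1 hlt2
    have hne3 : (a₁, b) ≠ (a₂, b) := by
      intro h; rw [h] at h13; exact clt_irrefl h13
    set f : ZMod 3 → ℕ × ℕ :=
      fun i => if i = 0 then (a₁, b) else if i = 1 then (a₂, b) else (x, y) with hf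
    have f0 : f 0 = (a₁, b) := by simp [hf]
    have f1 : f 1 = (a₂, b) := by
      simp only [hf]
      rw [if_neg (by decide : (1 : ZMod 3) ≠ 0)]
      simp
    have f2 : f 2 = (x, y) := by
      simp only [hf]
      rw [if_neg (by decide : (2 : ZMod 3) ≠ 0), if_neg (by decide : (2 : ZMod 3) ≠ 1)]
    have cases3 : ∀ i : ZMod 3, i = 0 ∨ i = 1 ∨ i = 2 := by decide
    refine ⟨3, le_refl 3, f, ?_, ?_, ?_⟩
    · intro i j hij
      rcases cases3 i with hi | hi | hi <;> rcases cases3 j with hj | hj | hj <;>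
        subst hi <;> subst hj <;>
        simp only [f0, f1, f2] at hij <;>
        first
          | rfl
          | exact absurd hij hne1
          | exact absurd hij hne2
          | exact absurd hij hne3
          | exact absurd hij.symm hne1
          | exact absurd hij.symm hne2
          | exact absurd hij.symm hne3
    · intro i
      rcases cases3 i with hi | hi | hi <;> subst hi <;>
        simp only [f0, f1, f2] <;> assumption
    · intro i
      rcases cases3 i with hi | hi | hi <;> subst hi
      · rw [show ((0 : ZMod 3) + 1) = 1 by decide, f0, f1]
        exact Or.inl ⟨rfl, h13⟩
      · rw [show ((1 : ZMod 3) + 1) = 2 by decide, f1, f2]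
        exact Or.inr ⟨fun h => hy h.symm, hlt2⟩
      · rw [show ((2 : ZMod 3) + 1) = 0 by decide, f2, f0]
        exact Or.inr ⟨hy, hlt1⟩
  · -- c-sparse → acyclic
    intro hS
    rintro ⟨m, hm, f, hinj, hmem, hedge⟩
    haveI : NeZero m := ⟨by omega⟩
    set N : ℕ := V.card + 1 with hN
    set A : ℕ × ℕ → ℕ := fun p => (V.filter (fun x => x.2 ≠ p.2 ∧ clt p x)).card with hA
    set B : ℕ × ℕ → ℕ := fun p => (V.filter (fun x => x.2 = p.2 ∧ clt x p)).card with hB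
    set r : ℕ × ℕ → ℕ := fun p => A p * N + B p with hr
    have hBlt : ∀ p, B p < N := by
      intro p
      have : (V.filter (fun x => x.2 = p.2 ∧ clt x p)).card ≤ V.card :=
        Finset.card_le_card (Finset.filter_subset _ _)
      simp only [hB, hN]; omega
    have key : ∀ p q, p ∈ V → q ∈ V → tedge p q → r p < r q := by
      intro p q hp hq he
      rcases he with ⟨hcol, hlt⟩ | ⟨hcol, hlt⟩
      · -- same column
        have hsets : V.filter (fun x => x.2 ≠ p.2 ∧ clt p x)
            = V.filter (fun x => x.2 ≠ q.2 ∧ clt q x) := by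
          apply Finset.ext
          intro z
          simp only [Finset.mem_filter]
          constructor
          · rintro ⟨hz, hzc, hzl⟩
            refine ⟨hz, hcol ▸ hzc, ?_⟩
            by_contra hnot
            have hzq : z ≠ q := by
              intro h; rw [h] at hzc; exact hzc hcol.symm
            rcases clt_total hzq with h | h
            · have hq' : (q.1, p.2) ∈ V := by rw [hcol]; exact hq
              refine hS p.1 q.1 p.2 z.1 z.2 hp hq' hz hzc hzl ?_
              rw [hcol]
              exact h
            · exact hnot h
          · rintro ⟨hz, hzc, hzl⟩
            exact ⟨hz, hcol ▸ hzc, clt_trans hlt hzl⟩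
        have hAeq : A p = A q := by simp only [hA]; rw [hsets]
        have hBlt' : B p < B q := by
          apply Finset.card_lt_card
          rw [Finset.ssubset_iff_of_subset]
          · refine ⟨p, ?_, ?_⟩
            · simp only [Finset.mem_filter]
              exact ⟨hp, hcol, hlt⟩
            · simp only [Finset.mem_filter]
              rintro ⟨-, -, h⟩
              exact clt_irrefl h
          · intro z hz
            simp only [Finset.mem_filter] at hz ⊢
            exact ⟨hz.1, hcol ▸ hz.2.1, clt_trans hz.2.2 hlt⟩
        simp only [hr]
        rw [hAeq]
        omega
      · -- different columns, clt q p
        have hAlt : A p < A q := by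
          apply Finset.card_lt_card
          rw [Finset.ssubset_iff_of_subset]
          · refine ⟨p, ?_, ?_⟩
            · simp only [Finset.mem_filter]
              exact ⟨hp, hcol, hlt⟩
            · simp only [Finset.mem_filter]
              rintro ⟨-, h, -⟩
              exact h rfl
          · intro z hz
            simp only [Finset.mem_filter] at hz ⊢
            refine ⟨hz.1, ?_, clt_trans hlt hz.2.2⟩
            intro hzq
            have hz' : (z.1, q.2) ∈ V := by rw [← hzq]; exact hz.1
            have hcl : clt (p.1, p.2) (z.1, q.2) := by
              rw [show ((z.1, q.2) : ℕ × ℕ) = z by rw [← hzq]]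
              exact hz.2.2
            exact hS q.1 z.1 q.2 p.1 p.2 hq hz' hp hcol hlt hcl
        have h1 : r p < (A p + 1) * N := by
          simp only [hr]
          have := hBlt p
          nlinarith
        have h2 : (A p + 1) * N ≤ A q * N := Nat.mul_le_mul_right N hAlt
        have h3 : A q * N ≤ r q := by simp only [hr]; omega
        omega
    obtain ⟨i₀, -, hmax⟩ := Finset.exists_max_image Finset.univ (fun i => r (f i))
      ⟨0, Finset.mem_univ 0⟩
    have h1 : r (f i₀) < r (f (i₀ + 1)) :=
      key _ _ (hmem i₀) (hmem (i₀ + 1)) (hedge i₀)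
    have h2 : r (f (i₀ + 1)) ≤ r (f i₀) := hmax _ (Finset.mem_univ _)
    omega
end

section
/- In the orientation K of the complete balanced n-partite graph built on the n×m checkerboard (rows being the independent sets), if a subset V of vertices induces no directed triangle, then V is weak-c-sparse. -/
/-- The orientation of the complete balanced n-partite graph built on the checkerboard:
rows are the independent sets; for cells in distinct rows, within a column the edge goes
from the lexicographically smaller cell to the larger, between different columns from the
larger to the smaller. -/
def kedge (p q : ℕ × ℕ) : Prop :=
  p.1 ≠ q.1 ∧ ((p.2 = q.2 ∧ clt p q) ∨ (p.2 ≠ q.2 ∧ clt q p))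

theorem no_triangle_weak_csparse (n m : ℕ) (V : Finset (ℕ × ℕ))
    (hV : V ⊆ board n m)
    (h : ¬ ∃ u ∈ V, ∃ v ∈ V, ∃ w ∈ V, kedge u v ∧ kedge v w ∧ kedge w u) :
    WeakCSparse V := by
  intro a₁ a₂ b x y h1 h2 h3 hy hax hxa hc1 hc2
  exact h ⟨(a₁, b), h1, (a₂, b), h2, (x, y), h3,
    ⟨(hax.trans hxa).ne, Or.inl ⟨rfl, Or.inl (hax.trans hxa)⟩⟩,
    ⟨hxa.ne', Or.inr ⟨fun e => hy e.symm, hc2⟩⟩,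
    ⟨hax.ne', Or.inr ⟨hy, hc1⟩⟩⟩
end

section
/- For the explicit orientation K of the complete balanced n-partite graph with parts of size m built on the n×m checkerboard, any coloring of the vertices with no monochromatic directed triangle uses at least nm/(n+2m−2) colors. -/
/-! In one colour class, cells `(a, j)`, `(b, j)` and `(r, j')` with `j' ≠ j` and `a < r < b`
would form a directed triangle. So the rows strictly inside the row range of one column are used by
no other column. Every column consists of such interior rows and at most two extreme rows, which
bounds a class by `n + 2m`, and by `n + 2m - 2` as soon as some column holds two cells, because
its two extreme rows are then interior to no column; a class with at most one cell per column has
at most `m` cells. Summing over the classes gives `nm ≤ |Q| (n + 2m - 2)`. -/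

open Finset

theorem Finset.card_eq_sum_card_slice {α β : Type*} [DecidableEq α] [DecidableEq β]
    {s : Finset (α × β)} {A : Finset α} {B : Finset β} (hs : s ⊆ A ×ˢ B) :
    #s = ∑ b ∈ B, #{a ∈ A | (a, b) ∈ s} :=
  calc #s = #{p ∈ A ×ˢ B | p ∈ s} := by rw [filter_mem_eq_inter, inter_eq_right.2 hs]
    _ = ∑ b ∈ B, #{a ∈ A | (a, b) ∈ s} := by simp only [card_filter, sum_product_right]

def Finset.interior {α : Type*} [LinearOrder α] (s : Finset α) : Finset α :=
  {x ∈ s | ∃ a ∈ s, ∃ b ∈ s, a < x ∧ x < b}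

namespace Finset

variable {ι α : Type*} [LinearOrder α]

theorem interior_subset (s : Finset α) : s.interior ⊆ s := filter_subset _ _

theorem min'_notMem_interior {s : Finset α} (hs : s.Nonempty) : s.min' hs ∉ s.interior :=
  fun h => by
    obtain ⟨a, ha, -, -, hlt, -⟩ := (mem_filter.1 h).2
    exact (min'_le s a ha).not_gt hlt

theorem max'_notMem_interior {s : Finset α} (hs : s.Nonempty) : s.max' hs ∉ s.interior :=
  fun h => by
    obtain ⟨-, -, b, hb, -, hlt⟩ := (mem_filter.1 h).2
    exact (le_max' s b hb).not_gt hlt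

theorem card_le_card_interior_add_two (s : Finset α) : #s ≤ #s.interior + 2 := by
  obtain rfl | hs := s.eq_empty_or_nonempty
  · simp
  have hsub : s ⊆ insert (s.min' hs) (insert (s.max' hs) s.interior) := by
    intro x hx
    simp only [mem_insert]
    by_contra! h
    exact h.2.2 <| mem_filter.2 ⟨hx, _, min'_mem s hs, _, max'_mem s hs,
      (min'_le s x hx).lt_of_ne h.1.symm, (le_max' s x hx).lt_of_ne h.2.1⟩
  calc #s ≤ #(insert (s.min' hs) (insert (s.max' hs) s.interior)) := card_le_card hsub
    _ ≤ #s.interior + 2 := by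
      have := card_insert_le (s.max' hs) s.interior
      have := card_insert_le (s.min' hs) (insert (s.max' hs) s.interior)
      omega

variable {R : ι → Finset α} {J : Finset ι}

theorem sum_card_le_card_biUnion_interior_add
    (hsep : (J : Set ι).Pairwise fun i j => Disjoint (R i).interior (R j)) :
    ∑ i ∈ J, #(R i) ≤ #(J.biUnion fun i => (R i).interior) + 2 * #J := by
  rw [card_biUnion (hsep.mono' fun i j h => h.mono_right (interior_subset (R j)))]
  calc ∑ i ∈ J, #(R i) ≤ ∑ i ∈ J, (#(R i).interior + 2) :=
        sum_le_sum fun i _ => card_le_card_interior_add_two (R i)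
    _ = ∑ i ∈ J, #(R i).interior + 2 * #J := by
      rw [sum_add_distrib, sum_const, smul_eq_mul, mul_comm]

theorem card_biUnion_interior_add_two_le {U : Finset α}
    (hsep : (J : Set ι).Pairwise fun i j => Disjoint (R i).interior (R j))
    (hU : ∀ i ∈ J, R i ⊆ U) {i₀ : ι} (hi₀ : i₀ ∈ J) (h2 : 2 ≤ #(R i₀)) :
    #(J.biUnion fun i => (R i).interior) + 2 ≤ #U := by
  have hne : (R i₀).Nonempty := card_pos.1 (by omega)
  set E : Finset α := {(R i₀).min' hne, (R i₀).max' hne}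
  have hER : E ⊆ R i₀ := by simp [E, insert_subset_iff, min'_mem, max'_mem]
  have hdisj : Disjoint (J.biUnion fun i => (R i).interior) E := by
    rw [disjoint_biUnion_left]
    intro i hi
    by_cases h : i = i₀
    · subst h
      simp [E, min'_notMem_interior, max'_notMem_interior]
    · exact (hsep hi hi₀ h).mono_right hER
  calc #(J.biUnion fun i => (R i).interior) + 2
      = #((J.biUnion fun i => (R i).interior) ∪ E) := by
        rw [card_union_of_disjoint hdisj, card_pair (min'_lt_max'_of_card _ h2).ne]
    _ ≤ #U := card_le_card <| union_subset
        (biUnion_subset.2 fun i hi => (interior_subset _).trans (hU i hi)) (hER.trans (hU i₀ hi₀))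

end Finset

theorem kedge_triangle {a r b j j' : ℕ} (har : a < r) (hrb : r < b) (hj : j' ≠ j) :
    kedge (a, j) (b, j) ∧ kedge (b, j) (r, j') ∧ kedge (r, j') (a, j) := by
  refine ⟨⟨by omega, .inl ⟨rfl, .inl (by omega)⟩⟩, ⟨by omega, .inr ⟨hj.symm, .inl hrb⟩⟩,
    ⟨by omega, .inr ⟨hj, .inl har⟩⟩⟩

theorem disjoint_interior_column {S : Finset (ℕ × ℕ)}
    (htri : ¬ ∃ u ∈ S, ∃ v ∈ S, ∃ w ∈ S, kedge u v ∧ kedge v w ∧ kedge w u)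
    (A : Finset ℕ) {j j' : ℕ} (hj : j ≠ j') :
    Disjoint {r ∈ A | (r, j) ∈ S}.interior {r ∈ A | (r, j') ∈ S} := by
  rw [disjoint_left]
  intro r hr hr'
  obtain ⟨-, a, ha, b, hb, har, hrb⟩ := mem_filter.1 hr
  exact htri ⟨_, (mem_filter.1 ha).2, _, (mem_filter.1 hb).2, _, (mem_filter.1 hr').2,
    kedge_triangle har hrb hj.symm⟩

theorem card_add_two_le_of_noTriangle {n m : ℕ} (hn : 1 ≤ n) (hm : 1 ≤ m)
    {S : Finset (ℕ × ℕ)} (hS : S ⊆ board n m)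
    (htri : ¬ ∃ u ∈ S, ∃ v ∈ S, ∃ w ∈ S, kedge u v ∧ kedge v w ∧ kedge w u) :
    #S + 2 ≤ n + 2 * m := by
  set R : ℕ → Finset ℕ := fun j => {r ∈ Icc 1 n | (r, j) ∈ S}
  have hcard : #S = ∑ j ∈ Icc 1 m, #(R j) := card_eq_sum_card_slice hS
  have hsep : (Icc 1 m : Set ℕ).Pairwise fun i j => Disjoint (R i).interior (R j) :=
    fun i _ j _ h => disjoint_interior_column htri _ h
  by_cases h : ∃ j ∈ Icc 1 m, 2 ≤ #(R j)
  · obtain ⟨j, hj, h2⟩ := h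
    have := sum_card_le_card_biUnion_interior_add hsep
    have := card_biUnion_interior_add_two_le hsep (fun j _ => filter_subset _ _) hj h2
    simp only [Nat.card_Icc] at *
    omega
  · push Not at h
    have : ∑ j ∈ Icc 1 m, #(R j) ≤ m :=
      calc ∑ j ∈ Icc 1 m, #(R j) ≤ ∑ j ∈ Icc 1 m, 1 := sum_le_sum fun j hj => by
            have := h j hj
            omega
        _ = m := by simp
    omega

theorem npartite_coloring_lower_bound (n m : ℕ) (hn : 1 ≤ n) (hm : 1 ≤ m)
    (Q : Finset (Finset (ℕ × ℕ)))
    (htri : ∀ S ∈ Q, ¬ ∃ u ∈ S, ∃ v ∈ S, ∃ w ∈ S, kedge u v ∧ kedge v w ∧ kedge w u)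
    (hdisj : ∀ S ∈ Q, ∀ T ∈ Q, S ≠ T → Disjoint S T)
    (hcover : Q.biUnion id = board n m) :
    ((n : ℚ) * m) / ((n : ℚ) + 2 * m - 2) ≤ Q.card := by
  have hsum : n * m = ∑ S ∈ Q, #S := by
    have := card_biUnion (t := id) fun S hS T hT => hdisj S hS T hT
    rw [hcover] at this
    simpa [board] using this
  have hcount : n * m + 2 * #Q ≤ #Q * (n + 2 * m) :=
    calc n * m + 2 * #Q = ∑ S ∈ Q, (#S + 2) := by
          rw [sum_add_distrib, sum_const, hsum, smul_eq_mul, mul_comm]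
      _ ≤ ∑ _S ∈ Q, (n + 2 * m) := sum_le_sum fun S hS =>
          card_add_two_le_of_noTriangle hn hm (hcover ▸ subset_biUnion_of_mem id hS) (htri S hS)
      _ = #Q * (n + 2 * m) := by rw [sum_const, smul_eq_mul]
  have hpos : (0 : ℚ) < n + 2 * m - 2 := by
    have : (1 : ℚ) ≤ n := by exact_mod_cast hn
    have : (1 : ℚ) ≤ m := by exact_mod_cast hm
    linarith
  have hcount' : (n * m + 2 * #Q : ℚ) ≤ #Q * (n + 2 * m) := by exact_mod_cast hcount
  rw [div_le_iff₀ hpos]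
  linarith
end

section
/- Let T be the tournament on vertex set ℝ² where, for distinct points (i₁,j₁), (i₂,j₂) ordered lexicographically: if j₁ = j₂ the edge is directed from the lexicographically smaller to the larger, and if j₁ ≠ j₂ from the larger to the smaller. Then for every partition of ℝ² into countably many parts, some part contains a directed triangle (hence the dichromatic number of T is uncountable). -/
/-- Lexicographic order on the plane. -/
def rlt (p q : ℝ × ℝ) : Prop := p.1 < q.1 ∨ (p.1 = q.1 ∧ p.2 < q.2)

/-- The orientation of the tournament on ℝ²: between points with the same y-coordinate
the edge goes from the lexicographically smaller to the larger, between points with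
different y-coordinates from the larger to the smaller. -/
def redge (p q : ℝ × ℝ) : Prop :=
  (p.2 = q.2 ∧ rlt p q) ∨ (p.2 ≠ q.2 ∧ rlt q p)

/-- From three distinct points of a set, extract an increasing triple. -/
lemma three_sorted {s : Set ℝ} {a b c : ℝ} (ha : a ∈ s) (hb : b ∈ s) (hc : c ∈ s)
    (hab : a ≠ b) (hac : a ≠ c) (hbc : b ≠ c) :
    ∃ x y z, x ∈ s ∧ y ∈ s ∧ z ∈ s ∧ x < y ∧ y < z := by
  rcases hab.lt_or_gt with h1 | h1 <;> rcases hac.lt_or_gt with h2 | h2 <;>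
    rcases hbc.lt_or_gt with h3 | h3 <;>
    first
      | exact ⟨a, b, c, ha, hb, hc, h1, h3⟩
      | exact ⟨a, c, b, ha, hc, hb, h2, h3⟩
      | exact ⟨b, a, c, hb, ha, hc, h1, h2⟩
      | exact ⟨c, a, b, hc, ha, hb, h2, h1⟩
      | exact ⟨b, c, a, hb, hc, ha, h3, h2⟩
      | exact ⟨c, b, a, hc, hb, ha, h3, h1⟩

/-- Every row has a color class with three increasing points, hence rationals
strictly separating them. -/
lemma row_data (f : ℝ × ℝ → ℕ) (y : ℝ) :
    ∃ (k : ℕ) (p q : ℚ),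
      (∃ a : ℝ, f (a, y) = k ∧ a < p) ∧
      (∃ t : ℝ, f (t, y) = k ∧ (p : ℝ) < t ∧ t < q) ∧
      (∃ b : ℝ, f (b, y) = k ∧ (q : ℝ) < b) := by
  -- some color class on row y is uncountable
  have huc : ∃ k : ℕ, ¬ (Set.Countable {x : ℝ | f (x, y) = k}) := by
    by_contra h
    push_neg at h
    have : (Set.univ : Set ℝ).Countable := by
      have hsub : (Set.univ : Set ℝ) ⊆ ⋃ k : ℕ, {x : ℝ | f (x, y) = k} := by
        intro x _
        exact Set.mem_iUnion.2 ⟨f (x, y), rfl⟩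
      exact Set.Countable.mono hsub (Set.countable_iUnion h)
    exact Cardinal.not_countable_real this
  obtain ⟨k, hk⟩ := huc
  set s := {x : ℝ | f (x, y) = k} with hs
  have hinf : s.Infinite := fun hfin => hk hfin.countable
  obtain ⟨a, ha⟩ := hinf.nonempty
  obtain ⟨b, hb⟩ := ((hinf.diff (Set.finite_singleton a))).nonempty
  obtain ⟨c, hc⟩ := ((hinf.diff ((Set.finite_singleton b).insert a))).nonempty
  have hbs : b ∈ s := hb.1
  have hcs : c ∈ s := hc.1
  have hab : a ≠ b := fun h => hb.2 (Set.mem_singleton_iff.2 h.symm)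
  have hac : a ≠ c := fun h => hc.2 (Set.mem_insert_iff.2 (Or.inl h.symm))
  have hbc : b ≠ c := fun h => hc.2 (Set.mem_insert_iff.2 (Or.inr (Set.mem_singleton_iff.2 h.symm)))
  obtain ⟨x₁, x₂, x₃, h₁, h₂, h₃, h12, h23⟩ := three_sorted ha hbs hcs hab hac hbc
  obtain ⟨p, hp1, hp2⟩ := exists_rat_btwn h12
  obtain ⟨q, hq1, hq2⟩ := exists_rat_btwn h23
  exact ⟨k, p, q, ⟨x₁, h₁, hp1⟩, ⟨x₂, h₂, hp2, hq1⟩, ⟨x₃, h₃, hq2⟩⟩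

theorem uncountable_dichromatic (f : ℝ × ℝ → ℕ) :
    ∃ u v w : ℝ × ℝ, f u = f v ∧ f v = f w ∧ redge u v ∧ redge v w ∧ redge w u := by
  choose k p q h₁ h₂ h₃ using row_data f
  -- find two rows with the same data
  have : ∃ y₁ y₂ : ℝ, y₁ ≠ y₂ ∧ k y₁ = k y₂ ∧ p y₁ = p y₂ ∧ q y₁ = q y₂ := by
    by_contra h
    push_neg at h
    have hinj : Function.Injective (fun y : ℝ => (k y, p y, q y)) := by
      intro y₁ y₂ hy
      by_contra hne
      simp only [Prod.mk.injEq] at hy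
      exact h y₁ y₂ hne hy.1 hy.2.1 hy.2.2
    exact (not_countable (α := ℝ)) hinj.countable
  obtain ⟨y₁, y₂, hy, hk, hp, hq⟩ := this
  obtain ⟨a, hfa, hap⟩ := h₁ y₁
  obtain ⟨b, hfb, hqb⟩ := h₃ y₁
  obtain ⟨t, hft, hpt, htq⟩ := h₂ y₂
  rw [← hp] at hpt
  rw [← hq] at htq
  refine ⟨(a, y₁), (b, y₁), (t, y₂), ?_, ?_, ?_, ?_, ?_⟩
  · rw [hfa, hfb]
  · rw [hfb, hft, hk]
  · exact Or.inl ⟨rfl, Or.inl (by dsimp; linarith)⟩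
  · exact Or.inr ⟨hy, Or.inl (by dsimp; linarith)⟩
  · exact Or.inr ⟨Ne.symm hy, Or.inl (by dsimp; linarith)⟩
end

section
/- Let T be the tournament on ℝ² as above and suppose C is a color class (a subset of ℝ²) containing no directed triangle. For r ∈ ℝ let L_r = {(x, r) : x ∈ ℝ} be the horizontal line y = r. If C ∩ L_r has at least 3 points and C ∩ L_{r'} has at least 3 points for r ≠ r', then the open intervals (inf{x : (x,r) ∈ C}, sup{x : (x,r) ∈ C}) and (inf{x : (x,r') ∈ C}, sup{x : (x,r') ∈ C}) are disjoint. -/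
theorem color_class_intervals_disjoint (C : Set (ℝ × ℝ))
    (hC : ¬ ∃ u ∈ C, ∃ v ∈ C, ∃ w ∈ C, redge u v ∧ redge v w ∧ redge w u)
    (r r' : ℝ) (hrr : r ≠ r')
    (h3 : ∃ x₁ x₂ x₃ : ℝ, x₁ ≠ x₂ ∧ x₁ ≠ x₃ ∧ x₂ ≠ x₃ ∧
      (x₁, r) ∈ C ∧ (x₂, r) ∈ C ∧ (x₃, r) ∈ C)
    (h3' : ∃ x₁ x₂ x₃ : ℝ, x₁ ≠ x₂ ∧ x₁ ≠ x₃ ∧ x₂ ≠ x₃ ∧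
      (x₁, r') ∈ C ∧ (x₂, r') ∈ C ∧ (x₃, r') ∈ C) :
    Disjoint
      (Set.Ioo (sInf (Real.toEReal '' {x : ℝ | (x, r) ∈ C}))
               (sSup (Real.toEReal '' {x : ℝ | (x, r) ∈ C})))
      (Set.Ioo (sInf (Real.toEReal '' {x : ℝ | (x, r') ∈ C}))
               (sSup (Real.toEReal '' {x : ℝ | (x, r') ∈ C}))) := by
  rw [Set.disjoint_left]
  rintro z ⟨hz1, hz2⟩ ⟨hz1', hz2'⟩
  obtain ⟨_, ⟨a, ha, rfl⟩, hal⟩ := sInf_lt_iff.mp hz1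
  obtain ⟨_, ⟨b, hb, rfl⟩, hbl⟩ := lt_sSup_iff.mp hz2
  obtain ⟨_, ⟨a', ha', rfl⟩, hal'⟩ := sInf_lt_iff.mp hz1'
  obtain ⟨_, ⟨b', hb', rfl⟩, hbl'⟩ := lt_sSup_iff.mp hz2'
  have hab : a < b := by exact_mod_cast hal.trans hbl
  have hab' : a' < b' := by exact_mod_cast hal'.trans hbl'
  have ha'b : a' < b := by exact_mod_cast hal'.trans hbl
  have hab2 : a < b' := by exact_mod_cast hal.trans hbl'
  apply hC
  rcases lt_trichotomy a a' with h | h | h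
  · exact ⟨(a, r), ha, (b, r), hb, (a', r'), ha',
      Or.inl ⟨rfl, Or.inl hab⟩, Or.inr ⟨hrr, Or.inl ha'b⟩,
      Or.inr ⟨Ne.symm hrr, Or.inl h⟩⟩
  · rcases lt_or_gt_of_ne hrr with hr | hr
    · exact ⟨(a, r), ha, (b, r), hb, (a', r'), ha',
        Or.inl ⟨rfl, Or.inl hab⟩, Or.inr ⟨hrr, Or.inl ha'b⟩,
        Or.inr ⟨Ne.symm hrr, Or.inr ⟨h, hr⟩⟩⟩
    · exact ⟨(a', r'), ha', (b', r'), hb', (a, r), ha,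
        Or.inl ⟨rfl, Or.inl hab'⟩, Or.inr ⟨Ne.symm hrr, Or.inl hab2⟩,
        Or.inr ⟨hrr, Or.inr ⟨h.symm, hr⟩⟩⟩
  · exact ⟨(a', r'), ha', (b', r'), hb', (a, r), ha,
      Or.inl ⟨rfl, Or.inl hab'⟩, Or.inr ⟨Ne.symm hrr, Or.inl hab2⟩,
      Or.inr ⟨hrr, Or.inl h⟩⟩
end
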